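/- Let u, v ∈ ℕ^N be multi-indices with unit vectors μ ≠ ν two distinct directions. Then Σ over multi-indices r with |r| ≤ p-2 of C(r+μ+ν, r+ν)·C(r+μ+ν, r+μ) = Σ over r with |r| ≤ p-2 of (r_μ+1)(r_ν+1), which equals (N+p choose N+2). -/

import Mathlib

/-- Multi-dimensional binomial coefficient. -/
def multiBinom {N : ℕ} (a b : Fin N → ℕ) : ℕ := ∏ i, (a i).choose (b i)

/-- The finset of multi-indices `m : Fin N → ℕ` with `∑ i, m i ≤ p`. -/
def multiIdx (N p : ℕ) : Finset (Fin N → ℕ) :=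
  (Fintype.piFinset fun _ : Fin N => Finset.range (p + 1)).filter
    fun m => ∑ i, m i ≤ p

/-- Unit multi-index in direction `μ` (as a natural multi-index). -/
def unitIdx {N : ℕ} (μ : Fin N) : Fin N → ℕ := fun i => if i = μ then 1 else 0

/-!
Each multi-binomial factor has a lower index differing from the upper one in a single coordinate,
so it collapses to `r μ + 1`, resp. `r ν + 1`. The weight `(r μ + 1) * (r ν + 1)` counts the ways
to split `r μ = a + a'` and `r ν = b + b'`; recording `a'` and `b'` as two new coordinates turns the
weighted count of multi-indices of size `≤ q` in `N` variables into the plain count in `N + 2`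
variables, which is `(N + 2 + q).choose (N + 2)` by stars and bars.
-/

open Finset

theorem mem_multiIdx {N q : ℕ} {r : Fin N → ℕ} : r ∈ multiIdx N q ↔ ∑ i, r i ≤ q := by
  simp only [multiIdx, mem_filter, Fintype.mem_piFinset, mem_range, and_iff_right_iff_imp]
  exact fun h i =>
    Nat.lt_succ_of_le <| (single_le_sum (fun j _ => Nat.zero_le (r j)) (mem_univ i)).trans h

theorem multiBinom_add_unitIdx_self {N : ℕ} (r : Fin N → ℕ) (μ : Fin N) :
    multiBinom (r + unitIdx μ) r = r μ + 1 := by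
  rw [multiBinom, Fintype.prod_eq_single μ fun i hi => by simp [unitIdx, hi]]
  simp [unitIdx]

theorem card_multiIdx_succ (N q : ℕ) :
    #(multiIdx (N + 1) q) = ∑ j ∈ range (q + 1), #(multiIdx N j) := by
  rw [← card_sigma]
  refine card_nbij' (fun s => ⟨q - s (Fin.last N), Fin.init s⟩)
    (fun x => Fin.snoc x.2 (q - x.1)) ?_ ?_ ?_ ?_
  · intro s hs
    simp only [coe_sigma, Set.mem_sigma_iff, mem_coe, mem_range, mem_multiIdx,
      Fin.sum_univ_castSucc] at hs ⊢
    exact ⟨by omega, by simp only [Fin.init]; omega⟩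
  · rintro ⟨j, r⟩ hx
    simp only [coe_sigma, Set.mem_sigma_iff, mem_coe, mem_range, mem_multiIdx,
      Fin.sum_snoc] at hx ⊢
    omega
  · intro s hs
    rw [mem_coe, mem_multiIdx, Fin.sum_univ_castSucc] at hs
    simp [Nat.sub_sub_self (show s (Fin.last N) ≤ q by omega)]
  · rintro ⟨j, r⟩ hx
    simp only [coe_sigma, Set.mem_sigma_iff, mem_coe, mem_range] at hx
    simp [Nat.sub_sub_self (Nat.le_of_lt_succ hx.1)]

theorem card_multiIdx (N q : ℕ) : #(multiIdx N q) = (N + q).choose N := by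
  induction N generalizing q with
  | zero =>
    rw [Nat.choose_zero_right, card_eq_one]
    exact ⟨0, by ext r; simp [mem_multiIdx, Subsingleton.elim r 0]⟩
  | succ N ih =>
    simp_rw [card_multiIdx_succ, ih, add_comm N, Nat.sum_range_add_choose]
    ring_nf

theorem sub_single_add_single {ι : Type*} [DecidableEq ι] {r : ι → ℕ} {μ : ι} {c : ℕ}
    (h : c ≤ r μ) : r - Pi.single μ c + Pi.single μ c = r := by
  ext i
  rcases eq_or_ne i μ with rfl | hi <;> simp [*]

theorem sum_add_one_smul_eq_sum_multiIdx_succ {M : Type*} [AddCommMonoid M] {N : ℕ} (q : ℕ)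
    (μ : Fin N) (f : (Fin N → ℕ) → M) :
    ∑ r ∈ multiIdx N q, (r μ + 1) • f r =
      ∑ s ∈ multiIdx (N + 1) q, f (Fin.init s + Pi.single μ (s (Fin.last N))) := by
  have hsigma : ∑ r ∈ multiIdx N q, (r μ + 1) • f r =
      ∑ x ∈ (multiIdx N q).sigma fun r => range (r μ + 1), f x.1 := by
    rw [sum_sigma]
    simp only [sum_const, card_range]
  rw [hsigma]
  refine sum_nbij' (fun x => Fin.snoc (x.1 - Pi.single μ x.2) x.2)
    (fun s => ⟨Fin.init s + Pi.single μ (s (Fin.last N)), s (Fin.last N)⟩) ?_ ?_ ?_ ?_ ?_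
  · rintro ⟨r, c⟩ hx
    rw [mem_sigma, mem_range, mem_multiIdx] at hx
    rw [mem_multiIdx, Fin.sum_snoc]
    have hsum := congrArg (fun r : Fin N → ℕ => ∑ i, r i)
      (sub_single_add_single (Nat.le_of_lt_succ hx.2))
    simp only [Pi.add_apply, sum_add_distrib, Fintype.sum_pi_single'] at hsum
    dsimp only at hx ⊢
    omega
  · intro s hs
    rw [mem_multiIdx, Fin.sum_univ_castSucc] at hs
    rw [mem_sigma, mem_range, mem_multiIdx]
    simp only [Pi.add_apply, Fin.init, sum_add_distrib, sum_pi_single', mem_univ, ↓reduceIte,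
      Pi.single_eq_same, Order.lt_add_one_iff, le_add_iff_nonneg_left, zero_le, and_true]
    omega
  · rintro ⟨r, c⟩ hx
    rw [mem_sigma, mem_range] at hx
    simp [sub_single_add_single (Nat.le_of_lt_succ hx.2)]
  · intro s _
    simp
  · rintro ⟨r, c⟩ hx
    rw [mem_sigma, mem_range] at hx
    simp [sub_single_add_single (Nat.le_of_lt_succ hx.2)]

theorem sum_mul_add_one_mul_add_one {N : ℕ} (q : ℕ) {μ ν : Fin N} (hμν : μ ≠ ν) :
    ∑ r ∈ multiIdx N q, (r μ + 1) * (r ν + 1) = #(multiIdx (N + 2) q) := by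
  calc ∑ r ∈ multiIdx N q, (r μ + 1) * (r ν + 1)
      = ∑ s ∈ multiIdx (N + 1) q, (s (Fin.castSucc ν) + 1) • 1 := by
        simp_rw [← smul_eq_mul, sum_add_one_smul_eq_sum_multiIdx_succ q μ (fun r => r ν + 1)]
        simp [hμν.symm, Fin.init]
    _ = #(multiIdx (N + 2) q) := by
        rw [sum_add_one_smul_eq_sum_multiIdx_succ, sum_const_nat fun _ _ => rfl, mul_one]

theorem sum_multiBinom_two_units {N p : ℕ} (hp : 2 ≤ p) (μ ν : Fin N) (hμν : μ ≠ ν) :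
    (∑ r ∈ multiIdx N (p - 2),
        multiBinom (r + unitIdx μ + unitIdx ν) (r + unitIdx ν) *
          multiBinom (r + unitIdx μ + unitIdx ν) (r + unitIdx μ) =
      ∑ r ∈ multiIdx N (p - 2), (r μ + 1) * (r ν + 1)) ∧
    (∑ r ∈ multiIdx N (p - 2), (r μ + 1) * (r ν + 1) = (N + p).choose (N + 2)) := by
  refine ⟨sum_congr rfl fun r _ => ?_, ?_⟩
  · have hμ : multiBinom (r + unitIdx μ + unitIdx ν) (r + unitIdx ν) = r μ + 1 := by
      rw [add_right_comm, multiBinom_add_unitIdx_self]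
      simp [unitIdx, hμν]
    have hν : multiBinom (r + unitIdx μ + unitIdx ν) (r + unitIdx μ) = r ν + 1 := by
      rw [multiBinom_add_unitIdx_self]
      simp [unitIdx, hμν.symm]
    rw [hμ, hν]
  · rw [sum_mul_add_one_mul_add_one _ hμν, card_multiIdx]
    congr 1
    omega
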